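/- arXiv:2407.04672 — 2 statements merged into one kernel-verified Lean document; each statement's English description precedes it below -/
import Mathlib

section
/- Let μ be the Gibbs distribution of a spin system on a finite graph G = (V,E) and suppose G has a (ξ,k)-degree partition V = U_1 ⊎ ⋯ ⊎ U_k. Then for every 0 ≤ ℓ ≤ k−1, the relaxation time of the Glauber dynamics on μ satisfies T_rel^GD(μ) ≤ T_rel(k,ℓ) · T_rel^{(η(ℓ))}(μ), where η(ℓ) = (1+ξ)(k−ℓ)/k and T_rel(k,ℓ) is the relaxation time of the k↔ℓ down-up walk on the partition U_1, …, U_k. -/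
/-! Fix `R ⊆ [k]` with `|R| = ℓ`. Every vertex has at most `(k - ℓ)(1 + ξ)Δ/k` neighbours
outside `U_R`, so `V ∖ U_R ∈ D(η(ℓ))`; and conditioning the Gibbs measure on the spins of `U_R`
gives the conditional Gibbs measure `μ^σ` with free set `V ∖ U_R`, since the weight factors into
a part depending only on the pinned spins and the conditional weight. Bounding the variance of
each `μ^σ` by `T₂` and averaging over `σ ∼ μ` bounds `μ[Var_{V∖U_R} f]` by
`T₂/n · Σ_v μ[Var_v f]`: the average over `σ` of a single-site conditional variance of `μ^σ` is
`μ[Var_v f]` for `v ∉ U_R` and `0` for `v ∈ U_R`. Feeding this into the `k ↔ ℓ` bound gives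
`T₁ T₂`. -/

open Finset
open scoped BigOperators Classical

namespace Paper

/-- Configurations: assignments of one of `q` spins to each of `n` vertices. -/
abbrev Config (n q : ℕ) := Fin n → Fin q

/-- A spin system on a graph `G` on vertex set `Fin n` with spin set `Fin q`:
nonnegative external fields and nonnegative symmetric interaction matrices. -/
structure SpinSystem (n q : ℕ) (G : SimpleGraph (Fin n)) where
  b : Fin n → Fin q → ℝ
  A : Fin n → Fin n → Fin q → Fin q → ℝ
  b_nonneg : ∀ v a, 0 ≤ b v a
  A_nonneg : ∀ v w a c, 0 ≤ A v w a c
  A_symm : ∀ v w a c, A v w a c = A w v c a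

variable {n q k : ℕ}

/-- The number of neighbours of `v` (in `G`) lying inside `Λ`. -/
noncomputable def degIn (G : SimpleGraph (Fin n)) (Λ : Finset (Fin n)) (v : Fin n) : ℕ :=
  (Λ.filter fun w => G.Adj v w).card

/-- The maximum degree of `G`. -/
noncomputable def maxDeg (G : SimpleGraph (Fin n)) : ℕ :=
  univ.sup fun v => degIn G univ v

/-- The edges of `G`, listed as ordered pairs `p` with `p.1 < p.2`. -/
noncomputable def edgePairs (G : SimpleGraph (Fin n)) : Finset (Fin n × Fin n) :=
  univ.filter fun p => p.1 < p.2 ∧ G.Adj p.1 p.2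

/-- Conditional Gibbs weight: the free set is `Λ`, and the pinning uses the values
of `τ` outside of `Λ`.  Edges lying entirely outside `Λ` are dropped. -/
noncomputable def condWeight {G : SimpleGraph (Fin n)} (S : SpinSystem n q G)
    (Λ : Finset (Fin n)) (τ σ : Config n q) : ℝ :=
  (if ∀ v, v ∉ Λ → σ v = τ v then (1 : ℝ) else 0)
    * (∏ v ∈ Λ, S.b v (σ v))
    * ∏ p ∈ (edgePairs G).filter (fun p => p.1 ∈ Λ ∨ p.2 ∈ Λ),
        S.A p.1 p.2 (σ p.1) (σ p.2)

/-- The conditional Gibbs distribution `μ^τ` with free set `Λ` and pinning `τ`. -/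
noncomputable def condDist {G : SimpleGraph (Fin n)} (S : SpinSystem n q G)
    (Λ : Finset (Fin n)) (τ : Config n q) : Config n q → ℝ :=
  fun σ => condWeight S Λ τ σ / ∑ σ' : Config n q, condWeight S Λ τ σ'

/-- The Gibbs distribution of the spin system. -/
noncomputable def gibbsDist {G : SimpleGraph (Fin n)} (S : SpinSystem n q G) :
    Config n q → ℝ :=
  fun σ => condWeight S univ σ σ / ∑ σ' : Config n q, condWeight S univ σ' σ'

/-- Every conditional weight has positive total mass. -/
def PosCondMass {G : SimpleGraph (Fin n)} (S : SpinSystem n q G) : Prop :=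
  ∀ (Λ : Finset (Fin n)) (τ : Config n q), 0 < ∑ σ : Config n q, condWeight S Λ τ σ

/-- Expectation of `f` under (the finitely supported density) `μ`. -/
noncomputable def expVal (μ f : Config n q → ℝ) : ℝ := ∑ σ, μ σ * f σ

/-- Variance of `f` under `μ`. -/
noncomputable def varD (μ f : Config n q → ℝ) : ℝ :=
  expVal μ fun σ => (f σ - expVal μ f) ^ 2

/-- `μ` conditioned to agree with `σ₀` on the set `T`. -/
noncomputable def restrictDist (μ : Config n q → ℝ) (T : Finset (Fin n)) (σ₀ : Config n q) :
    Config n q → ℝ :=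
  fun σ => (if ∀ v ∈ T, σ v = σ₀ v then μ σ else 0)
    / ∑ σ' ∈ univ.filter (fun σ' : Config n q => ∀ v ∈ T, σ' v = σ₀ v), μ σ'

/-- `μ[Var_S[f]]`: the average over `σ ~ μ` of the variance of `f` under `μ`
conditioned on the coordinates outside the free set `Sfree`. -/
noncomputable def avgCondVar (μ : Config n q → ℝ) (Sfree : Finset (Fin n))
    (f : Config n q → ℝ) : ℝ :=
  ∑ σ, μ σ * varD (restrictDist μ Sfreeᶜ σ) f

/-- `C` is an upper bound on the relaxation time of the Glauber dynamics on `μ`: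
approximate tensorization of variance with constant `C`. -/
def IsRelaxBound (μ : Config n q → ℝ) (C : ℝ) : Prop :=
  0 ≤ C ∧ ∀ f : Config n q → ℝ,
    varD μ f ≤ C / (n : ℝ) * ∑ v : Fin n, avgCondVar μ {v} f

/-- `π` is a coupling of `μ` and `ν`. -/
structure IsCoupling (μ ν : Config n q → ℝ) (π : Config n q → Config n q → ℝ) : Prop where
  nonneg : ∀ x y, 0 ≤ π x y
  fst_marginal : ∀ x, ∑ y, π x y = μ x
  snd_marginal : ∀ y, ∑ x, π x y = ν y

/-- Weighted Hamming distance with weight function `ρ`. -/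
noncomputable def hamW (ρ : Fin n → ℕ) (x y : Config n q) : ℝ :=
  ∑ v ∈ univ.filter (fun v => x v ≠ y v), (ρ v : ℝ)

/-- Expected weighted Hamming distance under a coupling `π`. -/
noncomputable def expHam (π : Config n q → Config n q → ℝ) (ρ : Fin n → ℕ) : ℝ :=
  ∑ x, ∑ y, π x y * hamW ρ x y

/-- Coupling independence (with a fixed witnessing weight `ρ`) of the Gibbs
distribution of the spin system `S`, using Gibbs conditional distributions. -/
def CoupIndepWith {G : SimpleGraph (Fin n)} (S : SpinSystem n q G) (ρ : Fin n → ℕ)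
    (C : ℝ) : Prop :=
  (∀ v, 0 < ρ v) ∧
  ∀ (P : Finset (Fin n)) (v₀ : Fin n) (σ₁ σ₂ : Config n q),
    v₀ ∈ P → σ₁ v₀ ≠ σ₂ v₀ → (∀ v ∈ P, v ≠ v₀ → σ₁ v = σ₂ v) →
    ∃ π, IsCoupling (condDist S Pᶜ σ₁) (condDist S Pᶜ σ₂) π ∧
      expHam π ρ ≤ C * (ρ v₀ : ℝ)

/-- The spin system `S` is `C`-coupling independent. -/
def CoupIndep {G : SimpleGraph (Fin n)} (S : SpinSystem n q G) (C : ℝ) : Prop :=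
  ∃ ρ : Fin n → ℕ, CoupIndepWith S ρ C

/-- `C`-coupling independence for a bare distribution `μ`, using conditionals
obtained by restriction. -/
def CoupIndepDist (μ : Config n q → ℝ) (C : ℝ) : Prop :=
  ∃ ρ : Fin n → ℕ, (∀ v, 0 < ρ v) ∧
  ∀ (P : Finset (Fin n)) (v₀ : Fin n) (σ₁ σ₂ : Config n q),
    v₀ ∈ P → σ₁ v₀ ≠ σ₂ v₀ → (∀ v ∈ P, v ≠ v₀ → σ₁ v = σ₂ v) →
    ∃ π, IsCoupling (restrictDist μ P σ₁) (restrictDist μ P σ₂) π ∧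
      expHam π ρ ≤ C * (ρ v₀ : ℝ)

/-- `Λ ∈ D(η)`: the induced subgraph `G[Λ]` has maximum degree at most `η·Δ`. -/
def InDeta (G : SimpleGraph (Fin n)) (η : ℝ) (Λ : Finset (Fin n)) : Prop :=
  ∀ v ∈ Λ, (degIn G Λ v : ℝ) ≤ η * (maxDeg G : ℝ)

/-- `U` is a partition of the vertex set into `k` (possibly empty) parts. -/
def IsPartition (U : Fin k → Finset (Fin n)) : Prop :=
  (∀ i j, i ≠ j → Disjoint (U i) (U j)) ∧ ∀ v : Fin n, ∃ i, v ∈ U i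

/-- A `(ξ,k)`-degree partition of `G`. -/
def IsDegreePartition (G : SimpleGraph (Fin n)) (ξ : ℝ) (U : Fin k → Finset (Fin n)) :
    Prop :=
  IsPartition U ∧ ∀ (v : Fin n) (i : Fin k),
    (degIn G (U i) v : ℝ) ≤ (1 + ξ) * (maxDeg G : ℝ) / (k : ℝ)

/-- `U_R = ⋃_{i ∈ R} U_i`. -/
noncomputable def unionBlocks (U : Fin k → Finset (Fin n)) (R : Finset (Fin k)) :
    Finset (Fin n) :=
  R.biUnion U

/-- The Glauber update `P_v` at vertex `v` for the distribution `μ`. -/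
noncomputable def glauberUpdate (μ : Config n q → ℝ) (v : Fin n) (x y : Config n q) : ℝ :=
  if ∀ u, u ≠ v → y u = x u then
    (if 0 < ∑ σ ∈ univ.filter (fun σ : Config n q => ∀ u, u ≠ v → σ u = x u), μ σ then
      μ y / ∑ σ ∈ univ.filter (fun σ : Config n q => ∀ u, u ≠ v → σ u = x u), μ σ
    else if y = x then 1 else 0)
  else 0

/-- The transition matrix of the Glauber dynamics on `μ`. -/
noncomputable def glauberP (μ : Config n q → ℝ) : Config n q → Config n q → ℝ :=
  fun x y => (1 / (n : ℝ)) * ∑ v : Fin n, glauberUpdate μ v x y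

/-- One step of a Markov kernel applied to a distribution. -/
noncomputable def stepD (P : Config n q → Config n q → ℝ) (ν : Config n q → ℝ) :
    Config n q → ℝ :=
  fun y => ∑ x, ν x * P x y

/-- The Dirac distribution at `x₀`. -/
noncomputable def delta (x₀ : Config n q) : Config n q → ℝ :=
  fun y => if y = x₀ then 1 else 0

/-- Total variation distance. -/
noncomputable def dTV (μ ν : Config n q → ℝ) : ℝ := (1 / 2) * ∑ σ, |μ σ - ν σ|

/-- TV distance to `μ` after `t` steps of the Glauber dynamics on `μ` started at `x₀`. -/
noncomputable def glauberDist (μ : Config n q → ℝ) (x₀ : Config n q) (t : ℕ) : ℝ :=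
  dTV ((stepD (glauberP μ))^[t] (delta x₀)) μ

/-- Coordinatewise partial order on configurations induced by the per-vertex
total orders `le`. -/
def ConfLE (le : Fin n → Fin q → Fin q → Prop) (x y : Config n q) : Prop :=
  ∀ v, le v (x v) (y v)

/-- Stochastic domination with respect to the order `le`. -/
def StochDom (le : Fin n → Fin q → Fin q → Prop) (μ ν : Config n q → ℝ) : Prop :=
  ∃ π, IsCoupling μ ν π ∧ ∀ x y, π x y ≠ 0 → ConfLE le x y

/-- `μ` is a monotone spin system w.r.t. the per-vertex orders `le`. -/
def MonotoneSystem (le : Fin n → Fin q → Fin q → Prop) (μ : Config n q → ℝ) : Prop :=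
  ∀ (v : Fin n) (x y : Config n q), ConfLE le x y →
    StochDom le (glauberUpdate μ v x) (glauberUpdate μ v y)

/-- Hardcore weight: spin `1` means occupied. -/
noncomputable def hcWeight (G : SimpleGraph (Fin n)) (lam : ℝ) (σ : Config n 2) : ℝ :=
  if ∀ u v, G.Adj u v → ¬(σ u = 1 ∧ σ v = 1) then
    lam ^ (univ.filter fun v => σ v = 1).card
  else 0

/-- The hardcore distribution on `G` with fugacity `lam`. -/
noncomputable def hardcoreDist (G : SimpleGraph (Fin n)) (lam : ℝ) : Config n 2 → ℝ :=
  fun σ => hcWeight G lam σ / ∑ σ' : Config n 2, hcWeight G lam σ'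

/-- The tree uniqueness threshold `λ_c(Δ)`. -/
noncomputable def lambdaC (Δ : ℕ) : ℝ := ((Δ : ℝ) - 1) ^ (Δ - 1) / ((Δ : ℝ) - 2) ^ Δ

/-- `G` is bipartite with parts `VL` and `VLᶜ`. -/
def Bipartite (G : SimpleGraph (Fin n)) (VL : Finset (Fin n)) : Prop :=
  ∀ u v, G.Adj u v → (u ∈ VL ↔ v ∉ VL)

/-- Maximum degree of `G` among the vertices of `W`. -/
noncomputable def maxDegOn (G : SimpleGraph (Fin n)) (W : Finset (Fin n)) : ℕ :=
  W.sup fun v => degIn G univ v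

/-- The marginal of `μ` on `W`, realized as a distribution on full configurations
that vanish (take spin `0`) outside of `W`. -/
noncomputable def marginalOn (μ : Config n 2 → ℝ) (W : Finset (Fin n)) :
    Config n 2 → ℝ :=
  fun σ => if ∀ v, v ∉ W → σ v = 0 then
      ∑ σ' ∈ univ.filter (fun σ' : Config n 2 => ∀ v ∈ W, σ' v = σ v), μ σ'
    else 0

/-- Proper list colorings of `G` with lists `L`. -/
noncomputable def properColorings (G : SimpleGraph (Fin n)) (L : Fin n → Finset (Fin q)) :
    Finset (Config n q) :=
  univ.filter fun σ => (∀ v, σ v ∈ L v) ∧ ∀ u v, G.Adj u v → σ u ≠ σ v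

/-- Uniform distribution over a finite set of configurations. -/
noncomputable def uniformOn (Ω : Finset (Config n q)) : Config n q → ℝ :=
  fun σ => if σ ∈ Ω then (1 : ℝ) / (Ω.card : ℝ) else 0

/-- The subgraph of `G` induced on `W` (kept on the same vertex type). -/
def restrictG (G : SimpleGraph (Fin n)) (W : Finset (Fin n)) : SimpleGraph (Fin n) where
  Adj u v := G.Adj u v ∧ u ∈ W ∧ v ∈ W
  symm := ⟨fun u v h => ⟨G.adj_symm h.1, h.2.2, h.2.1⟩⟩
  loopless := ⟨fun v h => G.irrefl h.1⟩

/-- The vertex set of the connected component of `v` in `G[W]` (empty if `v ∉ W`). -/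
noncomputable def compIn (G : SimpleGraph (Fin n)) (W : Finset (Fin n)) (v : Fin n) :
    Finset (Fin n) :=
  if v ∈ W then univ.filter (fun w => w ∈ W ∧ (restrictG G W).Reachable v w) else ∅

section Conditioning

variable {μ : Config n q → ℝ}

lemma varD_nonneg (hμ : ∀ x, 0 ≤ μ x) (f : Config n q → ℝ) : 0 ≤ varD μ f :=
  sum_nonneg fun x _ => mul_nonneg (hμ x) (sq_nonneg _)

lemma restrictDist_nonneg (hμ : ∀ x, 0 ≤ μ x) (T : Finset (Fin n)) (σ₀ x : Config n q) :
    0 ≤ restrictDist μ T σ₀ x :=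
  div_nonneg (by split_ifs <;> simp [hμ]) (sum_nonneg fun y _ => hμ y)

lemma avgCondVar_nonneg (hμ : ∀ x, 0 ≤ μ x) (A : Finset (Fin n)) (f : Config n q → ℝ) :
    0 ≤ avgCondVar μ A f :=
  sum_nonneg fun σ _ => mul_nonneg (hμ σ) (varD_nonneg (restrictDist_nonneg hμ _ _) f)

lemma restrictDist_eq_zero_of_not_agree {T : Finset (Fin n)} {σ₀ σ : Config n q}
    (h : ¬∀ v ∈ T, σ v = σ₀ v) : restrictDist μ T σ₀ σ = 0 := by
  simp only [restrictDist, if_neg h, zero_div]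

lemma agree_of_restrictDist_ne_zero {T : Finset (Fin n)} {σ₀ σ : Config n q}
    (h : restrictDist μ T σ₀ σ ≠ 0) : ∀ v ∈ T, σ v = σ₀ v :=
  not_not.1 fun h' => h (restrictDist_eq_zero_of_not_agree h')

lemma restrictDist_congr {T : Finset (Fin n)} {σ₀ σ₁ : Config n q}
    (h : ∀ v ∈ T, σ₀ v = σ₁ v) : restrictDist μ T σ₀ = restrictDist μ T σ₁ := by
  have hiff : ∀ σ : Config n q, (∀ v ∈ T, σ v = σ₀ v) ↔ ∀ v ∈ T, σ v = σ₁ v :=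
    fun σ => forall₂_congr fun v hv => by rw [h v hv]
  funext σ
  simp only [restrictDist, hiff]

lemma sum_mul_restrictDist (hμ : ∀ x, 0 ≤ μ x) (T : Finset (Fin n)) (τ : Config n q) :
    ∑ σ, μ σ * restrictDist μ T σ τ = μ τ := by
  set Z := ∑ σ ∈ univ.filter (fun σ : Config n q => ∀ v ∈ T, σ v = τ v), μ σ
  have hterm : ∀ σ, μ σ * restrictDist μ T σ τ =
      if ∀ v ∈ T, σ v = τ v then μ σ * (μ τ / Z) else 0 := by
    intro σ
    split_ifs with h
    · rw [restrictDist_congr h]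
      simp [restrictDist, Z]
    · rw [restrictDist_eq_zero_of_not_agree fun h' => h fun v hv => (h' v hv).symm, mul_zero]
  rw [sum_congr rfl fun σ _ => hterm σ, ← sum_filter, ← sum_mul]
  rcases eq_or_ne Z 0 with hZ | hZ
  · have : μ τ = 0 := (sum_eq_zero_iff_of_nonneg fun x _ => hμ x).1 hZ τ (by simp)
    simp [this]
  · exact mul_div_cancel₀ _ hZ

lemma restrictDist_restrictDist {T T' : Finset (Fin n)} {σ₀ τ : Config n q}
    (hτ : restrictDist μ T σ₀ τ ≠ 0) :
    restrictDist (restrictDist μ T σ₀) T' τ = restrictDist μ (T ∪ T') τ := by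
  have hτT := agree_of_restrictDist_ne_zero hτ
  set Z := ∑ σ ∈ univ.filter (fun σ : Config n q => ∀ v ∈ T, σ v = σ₀ v), μ σ
  have hZ : Z ≠ 0 := fun hZ => hτ (by simp [restrictDist, Z, hZ])
  have hagree : ∀ σ : Config n q, ((∀ v ∈ T', σ v = τ v) ∧ ∀ v ∈ T, σ v = σ₀ v) ↔
      ∀ v ∈ T ∪ T', σ v = τ v := by
    intro σ
    simp only [mem_union]
    constructor
    · rintro ⟨h', h⟩ v (hv | hv)
      · rw [h v hv, hτT v hv]
      · exact h' v hv
    · intro h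
      exact ⟨fun v hv => h v (Or.inr hv), fun v hv => (h v (Or.inl hv)).trans (hτT v hv)⟩
  have hnum : ∀ σ : Config n q, (if ∀ v ∈ T', σ v = τ v then restrictDist μ T σ₀ σ else 0)
      = (if ∀ v ∈ T ∪ T', σ v = τ v then μ σ else 0) / Z := by
    intro σ
    by_cases h : ∀ v ∈ T ∪ T', σ v = τ v
    · obtain ⟨h', hT⟩ := (hagree σ).2 h
      rw [if_pos h', if_pos h, restrictDist, if_pos hT]
    · rw [if_neg h, zero_div]
      split_ifs with h'
      · exact restrictDist_eq_zero_of_not_agree fun h'' => h ((hagree σ).1 ⟨h', h''⟩)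
      · rfl
  funext σ
  rw [restrictDist, hnum, sum_filter, sum_congr rfl fun σ _ => hnum σ, ← sum_div,
    ← sum_filter, div_div_div_cancel_right₀ hZ, restrictDist]

lemma varD_restrictDist_univ (τ : Config n q) (f : Config n q → ℝ) :
    varD (restrictDist μ univ τ) f = 0 := by
  set d := restrictDist μ univ τ
  have hd : ∀ σ, σ ≠ τ → d σ = 0 := fun σ hσ =>
    restrictDist_eq_zero_of_not_agree fun h => hσ (funext fun v => h v (mem_univ v))
  have hexp : ∀ g : Config n q → ℝ, expVal d g = d τ * g τ := fun g =>
    sum_eq_single τ (fun σ _ hσ => by rw [hd σ hσ, zero_mul]) (by simp)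
  have hdτ : d τ = μ τ / μ τ := by
    have : univ.filter (fun σ : Config n q => ∀ v ∈ univ, σ v = τ v) = {τ} := by
      ext σ; simp [funext_iff]
    simp only [d, restrictDist, this, sum_singleton]
    simp
  rw [varD, hexp, hexp, hdτ]
  rcases eq_or_ne (μ τ) 0 with h | h
  · simp [h]
  · simp [div_self h]

lemma avgCondVar_empty (f : Config n q → ℝ) : avgCondVar μ ∅ f = 0 := by
  simp [avgCondVar, varD_restrictDist_univ]

lemma sum_mul_avgCondVar_restrictDist (hμ : ∀ x, 0 ≤ μ x) (T A : Finset (Fin n))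
    (f : Config n q → ℝ) :
    ∑ σ, μ σ * avgCondVar (restrictDist μ T σ) A f = avgCondVar μ (A \ T) f := by
  have hcompl : T ∪ Aᶜ = (A \ T)ᶜ := by
    ext v; simp only [mem_union, mem_compl, mem_sdiff]; tauto
  have hinner : ∀ σ, avgCondVar (restrictDist μ T σ) A f =
      ∑ τ, restrictDist μ T σ τ * varD (restrictDist μ (A \ T)ᶜ τ) f := by
    intro σ
    refine sum_congr rfl fun τ _ => ?_
    rcases eq_or_ne (restrictDist μ T σ τ) 0 with h | h
    · simp [h]
    · rw [restrictDist_restrictDist h, hcompl]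
  simp_rw [hinner, mul_sum, ← mul_assoc]
  rw [sum_comm]
  exact sum_congr rfl fun τ _ => by rw [← sum_mul, sum_mul_restrictDist hμ]

lemma avgCondVar_singleton_sdiff_le (hμ : ∀ x, 0 ≤ μ x) (T : Finset (Fin n)) (v : Fin n)
    (f : Config n q → ℝ) : avgCondVar μ ({v} \ T) f ≤ avgCondVar μ {v} f := by
  by_cases hv : v ∈ T
  · rw [sdiff_eq_empty_iff_subset.2 (singleton_subset_iff.2 hv), avgCondVar_empty]
    exact avgCondVar_nonneg hμ _ f
  · rw [sdiff_eq_self_of_disjoint (disjoint_singleton_left.2 hv)]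

end Conditioning

section RelaxationBounds

variable {μ : Config n q → ℝ}

lemma avgCondVar_compl_le_of_isRelaxBound (hμ : ∀ x, 0 ≤ μ x) {T : Finset (Fin n)} {C : ℝ}
    (hC : 0 ≤ C) (hT : ∀ σ, μ σ ≠ 0 → IsRelaxBound (restrictDist μ T σ) C)
    (f : Config n q → ℝ) :
    avgCondVar μ Tᶜ f ≤ C / n * ∑ v : Fin n, avgCondVar μ {v} f := by
  have hCn : 0 ≤ C / n := div_nonneg hC n.cast_nonneg
  have hσ : ∀ σ, μ σ * varD (restrictDist μ T σ) f ≤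
      μ σ * (C / n * ∑ v : Fin n, avgCondVar (restrictDist μ T σ) {v} f) := by
    intro σ
    rcases eq_or_ne (μ σ) 0 with h | h
    · simp [h]
    · exact mul_le_mul_of_nonneg_left ((hT σ h).2 f) (hμ σ)
  calc avgCondVar μ Tᶜ f
      = ∑ σ, μ σ * varD (restrictDist μ T σ) f := by rw [avgCondVar, compl_compl]
    _ ≤ ∑ σ, μ σ * (C / n * ∑ v : Fin n, avgCondVar (restrictDist μ T σ) {v} f) :=
        sum_le_sum fun σ _ => hσ σ
    _ = C / n * ∑ v : Fin n, avgCondVar μ ({v} \ T) f := by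
        simp_rw [← sum_mul_avgCondVar_restrictDist hμ T, mul_sum]
        rw [sum_comm]
        exact sum_congr rfl fun v _ => sum_congr rfl fun σ _ => by ring
    _ ≤ C / n * ∑ v : Fin n, avgCondVar μ {v} f :=
        mul_le_mul_of_nonneg_left
          (sum_le_sum fun v _ => avgCondVar_singleton_sdiff_le hμ T v f) hCn

lemma isRelaxBound_mul_of_blocks (hμ : ∀ x, 0 ≤ μ x) {ι : Type*} (𝓡 : Finset ι)
    (h𝓡 : 𝓡.Nonempty) (Λ : ι → Finset (Fin n)) {T₁ T₂ : ℝ} (hT₁ : 0 ≤ T₁) (hT₂ : 0 ≤ T₂)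
    (hblock : ∀ f, varD μ f ≤ T₁ / #𝓡 * ∑ R ∈ 𝓡, avgCondVar μ (Λ R) f)
    (hcond : ∀ R ∈ 𝓡, ∀ σ, μ σ ≠ 0 → IsRelaxBound (restrictDist μ (Λ R)ᶜ σ) T₂) :
    IsRelaxBound μ (T₁ * T₂) := by
  refine ⟨mul_nonneg hT₁ hT₂, fun f => ?_⟩
  set B := T₂ / n * ∑ v : Fin n, avgCondVar μ {v} f
  have hR : ∀ R ∈ 𝓡, avgCondVar μ (Λ R) f ≤ B := fun R hR => by
    simpa using avgCondVar_compl_le_of_isRelaxBound hμ hT₂ (hcond R hR) f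
  have hcard : (0 : ℝ) < #𝓡 := by exact_mod_cast h𝓡.card_pos
  calc varD μ f ≤ T₁ / #𝓡 * ∑ R ∈ 𝓡, avgCondVar μ (Λ R) f := hblock f
    _ ≤ T₁ / #𝓡 * (#𝓡 * B) := by
        gcongr
        simpa using sum_le_sum hR
    _ = T₁ * T₂ / n * ∑ v : Fin n, avgCondVar μ {v} f := by
        rw [← mul_assoc, div_mul_cancel₀ _ hcard.ne']
        ring

end RelaxationBounds

section Gibbs

variable {G : SimpleGraph (Fin n)} (S : SpinSystem n q G)

lemma condWeight_nonneg (Λ : Finset (Fin n)) (τ σ : Config n q) : 0 ≤ condWeight S Λ τ σ :=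
  mul_nonneg (mul_nonneg (by split_ifs <;> norm_num) (prod_nonneg fun v _ => S.b_nonneg _ _))
    (prod_nonneg fun p _ => S.A_nonneg _ _ _ _)

lemma gibbsDist_nonneg (σ : Config n q) : 0 ≤ gibbsDist S σ :=
  div_nonneg (condWeight_nonneg S _ _ _) (sum_nonneg fun _ _ => condWeight_nonneg S _ _ _)

lemma condWeight_eq_zero_of_not_agree {Λ : Finset (Fin n)} {τ σ : Config n q}
    (h : ¬∀ v, v ∉ Λ → σ v = τ v) : condWeight S Λ τ σ = 0 := by
  rw [condWeight, if_neg h, zero_mul, zero_mul]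

lemma condWeight_univ (τ σ : Config n q) :
    condWeight S univ τ σ =
      (∏ v, S.b v (σ v)) * ∏ p ∈ edgePairs G, S.A p.1 p.2 (σ p.1) (σ p.2) := by
  simp [condWeight]

noncomputable def pinnedWeight (T : Finset (Fin n)) (σ₀ : Config n q) : ℝ :=
  (∏ v ∈ T, S.b v (σ₀ v)) *
    ∏ p ∈ (edgePairs G).filter (fun p => p.1 ∈ T ∧ p.2 ∈ T), S.A p.1 p.2 (σ₀ p.1) (σ₀ p.2)

lemma condWeight_univ_eq_mul_pinnedWeight (T : Finset (Fin n)) {σ₀ σ : Config n q}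
    (hσ : ∀ v ∈ T, σ v = σ₀ v) :
    condWeight S univ σ σ = condWeight S Tᶜ σ₀ σ * pinnedWeight S T σ₀ := by
  have hagree : ∀ v, v ∉ Tᶜ → σ v = σ₀ v := fun v hv => hσ v (by simpa using hv)
  have hb : ∏ v, S.b v (σ v) = (∏ v ∈ Tᶜ, S.b v (σ v)) * ∏ v ∈ T, S.b v (σ₀ v) := by
    rw [← prod_mul_prod_compl Tᶜ, compl_compl]
    exact congrArg _ (prod_congr rfl fun v hv => by rw [hσ v hv])
  have hA : ∏ p ∈ edgePairs G, S.A p.1 p.2 (σ p.1) (σ p.2) =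
      (∏ p ∈ (edgePairs G).filter (fun p => p.1 ∈ Tᶜ ∨ p.2 ∈ Tᶜ),
        S.A p.1 p.2 (σ p.1) (σ p.2)) *
      ∏ p ∈ (edgePairs G).filter (fun p => p.1 ∈ T ∧ p.2 ∈ T),
        S.A p.1 p.2 (σ₀ p.1) (σ₀ p.2) := by
    rw [← prod_filter_mul_prod_filter_not (edgePairs G) (fun p => p.1 ∈ Tᶜ ∨ p.2 ∈ Tᶜ)]
    congr 1
    have hinside : (edgePairs G).filter (fun p => ¬(p.1 ∈ Tᶜ ∨ p.2 ∈ Tᶜ)) =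
        (edgePairs G).filter (fun p => p.1 ∈ T ∧ p.2 ∈ T) :=
      filter_congr fun p _ => by simp only [mem_compl, not_or, not_not]
    rw [hinside]
    exact prod_congr rfl fun p hp => by
      rw [mem_filter] at hp
      rw [hσ _ hp.2.1, hσ _ hp.2.2]
  rw [condWeight_univ, condWeight, if_pos hagree, one_mul, pinnedWeight, hb, hA]
  ring

lemma restrictDist_gibbsDist (T : Finset (Fin n)) {σ₀ : Config n q}
    (hσ₀ : gibbsDist S σ₀ ≠ 0) : restrictDist (gibbsDist S) T σ₀ = condDist S Tᶜ σ₀ := by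
  obtain ⟨hW₀, hZ⟩ := div_ne_zero_iff.1 hσ₀
  set Z := ∑ σ' : Config n q, condWeight S univ σ' σ'
  have hc : pinnedWeight S T σ₀ ≠ 0 := fun hc => hW₀ <| by
    rw [condWeight_univ_eq_mul_pinnedWeight S T fun _ _ => rfl, hc, mul_zero]
  have hfactor : ∀ σ : Config n q,
      (if ∀ v ∈ T, σ v = σ₀ v then gibbsDist S σ else 0) =
        condWeight S Tᶜ σ₀ σ * pinnedWeight S T σ₀ / Z := by
    intro σ
    split_ifs with h
    · rw [gibbsDist, condWeight_univ_eq_mul_pinnedWeight S T h]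
    · rw [condWeight_eq_zero_of_not_agree S fun h' => h fun v hv => h' v (by simpa using hv),
        zero_mul, zero_div]
  funext σ
  rw [restrictDist, hfactor, sum_filter, sum_congr rfl fun σ _ => hfactor σ, ← sum_div,
    ← sum_mul, div_div_div_cancel_right₀ hZ, mul_div_mul_right _ _ hc, condDist]

end Gibbs

lemma inDeta_compl_unionBlocks {G : SimpleGraph (Fin n)} {ξ : ℝ} {U : Fin k → Finset (Fin n)}
    (hU : IsDegreePartition G ξ U) (R : Finset (Fin k)) :
    InDeta G ((1 + ξ) * ((k : ℝ) - #R) / k) (unionBlocks U R)ᶜ := by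
  intro v _
  have hcover : (unionBlocks U R)ᶜ ⊆ Rᶜ.biUnion U := fun w hw => by
    obtain ⟨i, hi⟩ := hU.1.2 w
    refine mem_biUnion.2 ⟨i, mem_compl.2 fun hiR => ?_, hi⟩
    exact mem_compl.1 hw (mem_biUnion.2 ⟨i, hiR, hi⟩)
  have hsplit : degIn G (unionBlocks U R)ᶜ v ≤ ∑ i ∈ Rᶜ, degIn G (U i) v := by
    unfold degIn
    calc #((unionBlocks U R)ᶜ.filter (G.Adj v))
        ≤ #((Rᶜ.biUnion U).filter (G.Adj v)) := card_le_card (filter_subset_filter _ hcover)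
      _ ≤ ∑ i ∈ Rᶜ, #((U i).filter (G.Adj v)) := by
          rw [filter_biUnion]
          exact card_biUnion_le
  have hcompl : ((#Rᶜ : ℕ) : ℝ) = k - #R := by
    rw [card_compl, Fintype.card_fin, Nat.cast_sub (by simpa using card_le_univ R)]
  calc (degIn G (unionBlocks U R)ᶜ v : ℝ)
      ≤ ∑ i ∈ Rᶜ, (degIn G (U i) v : ℝ) := by exact_mod_cast hsplit
    _ ≤ ∑ _i ∈ Rᶜ, (1 + ξ) * (maxDeg G : ℝ) / k := sum_le_sum fun i _ => hU.2 v i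
    _ = (1 + ξ) * ((k : ℝ) - #R) / k * maxDeg G := by
        rw [sum_const, nsmul_eq_mul, hcompl]
        ring

theorem statement3_general {n q : ℕ} (G : SimpleGraph (Fin n)) (S : SpinSystem n q G)
    (k : ℕ) (ξ : ℝ)
    (U : Fin k → Finset (Fin n)) (hU : IsDegreePartition G ξ U)
    (ℓ : ℕ) (hℓ : ℓ < k) :
    ∀ T₁ T₂ : ℝ, 0 ≤ T₁ → 0 ≤ T₂ →
      (∀ f : Config n q → ℝ,
        varD (gibbsDist S) f ≤ T₁ / (k.choose ℓ : ℝ) *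
          ∑ R ∈ (univ : Finset (Fin k)).powersetCard ℓ,
            avgCondVar (gibbsDist S) (unionBlocks U R)ᶜ f) →
      (∀ (Λ : Finset (Fin n)) (τ : Config n q),
        InDeta G ((1 + ξ) * ((k : ℝ) - (ℓ : ℝ)) / (k : ℝ)) Λ →
        IsRelaxBound (condDist S Λ τ) T₂) →
      IsRelaxBound (gibbsDist S) (T₁ * T₂) := by
  intro T₁ T₂ hT₁ hT₂ hblock hcond
  have hcard : #((univ : Finset (Fin k)).powersetCard ℓ) = k.choose ℓ := by simp
  refine isRelaxBound_mul_of_blocks (gibbsDist_nonneg S) ((univ : Finset (Fin k)).powersetCard ℓ)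
    (by simpa using hℓ.le) (fun R => (unionBlocks U R)ᶜ) hT₁ hT₂
    (by rwa [hcard]) fun R hR σ hσ => ?_
  rw [compl_compl, restrictDist_gibbsDist S _ hσ]
  refine hcond _ σ ?_
  simpa [(mem_powersetCard.1 hR).2] using inDeta_compl_unionBlocks hU R

/-- Lemma 2.6: comparing Glauber dynamics to the block
dynamics.  If `G` has a `(ξ,k)`-degree partition, then for every
`0 ≤ ℓ ≤ k−1`, `T_rel^GD(μ) ≤ T_rel(k,ℓ) · T_rel^{(η(ℓ))}(μ)` where
`η(ℓ) = (1+ξ)(k−ℓ)/k`; expressed via relaxation bounds: whenever `T₁` is a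
relaxation bound for the `k ↔ ℓ` down-up walk and `T₂` is a common relaxation
bound for all conditional distributions with free set in `D(η(ℓ))`, the
product `T₁·T₂` is a relaxation bound for `μ`. -/
theorem statement3 {n q : ℕ} (G : SimpleGraph (Fin n)) (S : SpinSystem n q G)
    (hq : 2 ≤ q) (hpos : PosCondMass S)
    (k : ℕ) (ξ : ℝ) (hξ : 0 < ξ)
    (U : Fin k → Finset (Fin n)) (hU : IsDegreePartition G ξ U)
    (ℓ : ℕ) (hℓ : ℓ < k) :
    ∀ T₁ T₂ : ℝ, 0 ≤ T₁ → 0 ≤ T₂ →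
      (∀ f : Config n q → ℝ,
        varD (gibbsDist S) f ≤ T₁ / (k.choose ℓ : ℝ) *
          ∑ R ∈ (univ : Finset (Fin k)).powersetCard ℓ,
            avgCondVar (gibbsDist S) (unionBlocks U R)ᶜ f) →
      (∀ (Λ : Finset (Fin n)) (τ : Config n q),
        InDeta G ((1 + ξ) * ((k : ℝ) - (ℓ : ℝ)) / (k : ℝ)) Λ →
        IsRelaxBound (condDist S Λ τ) T₂) →
      IsRelaxBound (gibbsDist S) (T₁ * T₂) :=
  statement3_general G S k ξ U hU ℓ hℓ

end Paper
end

section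
/- Let θ > 1 and let k ≥ ⌈2θ⌉ be an integer. Let G = (V_L ⊎ V_R, E) be a bipartite graph with maximum left degree Δ_L ≥ 1 and maximum right degree Δ_R ≤ θ·Δ_L. If e·θ²·Δ_L²·k·exp(−Δ_L/(2θ)) < 1, then there exists a partition V_L = U_1 ⊎ ⋯ ⊎ U_k such that |Γ(v) ∩ U_i| ≤ Δ_L for every v ∈ V_R and every i ∈ [k]. In particular, such a partition exists whenever Δ_L = Ω(θ·log(kθ)). -/
open Finset
open scoped BigOperators Classical

namespace Paper

variable {n q k : ℕ}

/-!
Colour all vertices uniformly at random with `k` colours and let `U_i` consist of the left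
vertices of colour `i`. For a vertex `v` of degree at most `θΔ`, an exponential-moment bound
with parameter `r = (2θ - 1)/(θ - 1)` shows that some colour occurs more than `Δ` times on
`Γ(v)` with probability at most `k ρ^{θΔ} / r^{Δ+1}`, where `ρ = r/2` bounds `(r + k - 1)/k`
as soon as `k ≥ 2θ`. The inequality `1/(2θ) + θ log ρ ≤ log r` turns the hypothesis into the
bound `1/(e(d + 1))`, where `d = θΔ²` bounds the number of vertices sharing a neighbour
with `v`, so the symmetric Lovász Local Lemma yields a colouring with no overloaded colour.
For the second claim, `Δ ≥ 100 θ log(kθ)` implies the hypothesis of the first.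
-/

section LocalLemma

variable {V α ι : Type*} [Fintype V] [Fintype α] [Fintype ι]

theorem card_inter_mul_card_eq_card_mul_card {T : Set V} {A B : Finset (V → α)}
    (hA : DependsOn (· ∈ A) T) (hB : DependsOn (· ∈ B) Tᶜ) :
    #(A ∩ B) * Fintype.card (V → α) = #A * #B := by
  let splice : (V → α) → (V → α) → (V → α) := fun f g v => if v ∈ T then f v else g v
  have hsplice : ∀ f g, splice (splice f g) (splice g f) = f := fun f g => by
    funext v; by_cases hv : v ∈ T <;> simp [splice, hv]
  rw [← card_univ, ← card_product, ← card_product]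
  refine card_nbij' (fun p => (splice p.1 p.2, splice p.2 p.1))
    (fun p => (splice p.1 p.2, splice p.2 p.1)) ?_ ?_ ?_ ?_
  · rintro ⟨f, g⟩ hfg
    simp only [coe_product, Set.mem_prod, mem_coe, mem_inter] at hfg ⊢
    refine ⟨(hA fun v hv => ?_).mpr hfg.1.1, (hB fun v hv => ?_).mpr hfg.1.2⟩ <;>
      simp_all [splice]
  · rintro ⟨f, g⟩ hfg
    simp only [coe_product, Set.mem_prod, mem_coe, mem_inter, mem_univ, and_true] at hfg ⊢
    refine ⟨(hA fun v hv => ?_).mp hfg.1, (hB fun v hv => ?_).mp hfg.2⟩ <;>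
      simp_all [splice]
  · rintro ⟨f, g⟩ -
    simp [hsplice]
  · rintro ⟨f, g⟩ -
    simp [hsplice]

noncomputable def avoiding (A : ι → Finset (V → α)) (S : Finset ι) : Finset (V → α) :=
  univ.filter fun f => ∀ j ∈ S, f ∉ A j

variable {A : ι → Finset (V → α)} {x : ℝ}

theorem avoiding_anti {S T : Finset ι} (h : S ⊆ T) : avoiding A T ⊆ avoiding A S :=
  fun f hf => by
    simp only [avoiding, mem_filter, mem_univ, true_and] at hf ⊢
    exact fun j hj => hf j (h hj)

theorem avoiding_insert (j : ι) (S : Finset ι) :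
    avoiding A (insert j S) = avoiding A S \ A j := by
  ext f
  simp [avoiding, and_comm]

theorem one_sub_mul_card_avoiding_le_card_avoiding_insert {j : ι} {S : Finset ι}
    (h : (#(A j ∩ avoiding A S) : ℝ) ≤ x * #(avoiding A S)) :
    (1 - x) * #(avoiding A S) ≤ #(avoiding A (insert j S)) := by
  rw [avoiding_insert, ← sdiff_inter_self_right, cast_card_sdiff inter_subset_right]
  linarith

theorem one_sub_pow_mul_card_avoiding_le (hx : x ≤ 1) (S : Finset ι) {T : Finset ι}
    (h : ∀ j ∈ T, ∀ T' ⊆ T, j ∉ T' →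
      (#(A j ∩ avoiding A (S ∪ T')) : ℝ) ≤ x * #(avoiding A (S ∪ T'))) :
    (1 - x) ^ #T * #(avoiding A S) ≤ #(avoiding A (S ∪ T)) := by
  induction T using Finset.induction_on with
  | empty => simp
  | @insert j T hjT ih =>
    have hT := ih fun j' hj' T' hT' =>
      h j' (mem_insert_of_mem hj') T' (hT'.trans (subset_insert _ _))
    have hj := one_sub_mul_card_avoiding_le_card_avoiding_insert
      (h j (mem_insert_self j T) T (subset_insert _ _) hjT)
    rw [card_insert_of_notMem hjT, union_insert, pow_succ', mul_assoc]
    exact (mul_le_mul_of_nonneg_left hT (sub_nonneg.2 hx)).trans hj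

variable (vbl : ι → Finset V) {d : ℕ}

theorem card_inter_avoiding_le (hdep : ∀ i, DependsOn (· ∈ A i) (vbl i : Set V))
    (hx0 : 0 ≤ x) (hx1 : x ≤ 1)
    (hnbr : ∀ i, #((univ.filter fun j => ¬Disjoint (vbl i) (vbl j)).erase i) ≤ d)
    (hp : ∀ i, (#(A i) : ℝ) ≤ x * (1 - x) ^ d * Fintype.card (V → α))
    (S : Finset ι) {i : ι} (hi : i ∉ S) :
    (#(A i ∩ avoiding A S) : ℝ) ≤ x * #(avoiding A S) := by
  induction S using Finset.strongInduction generalizing i with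
  | H S ih =>
  -- `A i` is independent of the events in `S₂`, and each of the at most `d` events in `S₁`
  -- removes at most a fraction `x` of the colourings.
  set S₁ := S.filter fun j => ¬Disjoint (vbl i) (vbl j)
  set S₂ := S \ S₁
  have hS₁ : #S₁ ≤ d := (card_le_card fun j hj => by
    simp only [S₁, mem_filter] at hj
    exact mem_erase.2 ⟨fun h => hi (h ▸ hj.1), mem_filter.2 ⟨mem_univ _, hj.2⟩⟩).trans
      (hnbr i)
  have hpeel : (1 - x) ^ d * #(avoiding A S₂) ≤ #(avoiding A S) := by
    have := one_sub_pow_mul_card_avoiding_le hx1 S₂ (T := S₁) fun j hj T' hT' hjT' => by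
      have hj' : j ∉ S₂ ∪ T' := by simp [S₂, hj, hjT']
      refine ih _ (ssubset_of_subset_of_ne (union_subset sdiff_subset (hT'.trans
        (filter_subset _ _))) fun h => hj' (h ▸ filter_subset _ _ hj)) hj'
    rw [sdiff_union_of_subset (filter_subset _ _)] at this
    exact (mul_le_mul_of_nonneg_right (pow_le_pow_of_le_one (by linarith) (by linarith) hS₁)
      (by positivity)).trans this
  have hindep :
      #(A i ∩ avoiding A S₂) * Fintype.card (V → α) = #(A i) * #(avoiding A S₂) := by
    refine card_inter_mul_card_eq_card_mul_card (hdep i) fun f g hfg => ?_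
    simp only [avoiding, mem_filter, mem_univ, true_and, eq_iff_iff]
    refine forall₂_congr fun j hj => not_congr (iff_of_eq (hdep j fun v hv => hfg v ?_))
    simp only [S₂, S₁, mem_sdiff, mem_filter, not_and, not_not] at hj
    exact Finset.disjoint_right.1 (hj.2 hj.1) hv
  have hsub : A i ∩ avoiding A S ⊆ A i ∩ avoiding A S₂ :=
    inter_subset_inter_left (avoiding_anti sdiff_subset)
  rcases (Fintype.card (V → α)).eq_zero_or_pos with hK | hK
  · have : #(A i ∩ avoiding A S) = 0 := Nat.eq_zero_of_le_zero (hK ▸ card_le_univ _)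
    rw [this, Nat.cast_zero]
    positivity
  have hS₂ : (#(A i ∩ avoiding A S₂) : ℝ) ≤ x * (1 - x) ^ d * #(avoiding A S₂) := by
    have hK' : (0 : ℝ) < Fintype.card (V → α) := by exact_mod_cast hK
    rw [← mul_le_mul_iff_of_pos_right hK']
    exact_mod_cast (congrArg (Nat.cast (R := ℝ)) hindep).le.trans
      (by push_cast; nlinarith [hp i, (by positivity : (0 : ℝ) ≤ #(avoiding A S₂))])
  calc (#(A i ∩ avoiding A S) : ℝ) ≤ #(A i ∩ avoiding A S₂) := by
        exact_mod_cast card_le_card hsub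
    _ ≤ x * ((1 - x) ^ d * #(avoiding A S₂)) := by linarith
    _ ≤ x * #(avoiding A S) := mul_le_mul_of_nonneg_left hpeel hx0

theorem lovasz_local_lemma [Nonempty α]
    (hdep : ∀ i, DependsOn (· ∈ A i) (vbl i : Set V))
    (hx0 : 0 ≤ x) (hx1 : x < 1)
    (hnbr : ∀ i, #((univ.filter fun j => ¬Disjoint (vbl i) (vbl j)).erase i) ≤ d)
    (hp : ∀ i, (#(A i) : ℝ) ≤ x * (1 - x) ^ d * Fintype.card (V → α)) :
    ∃ f : V → α, ∀ i, f ∉ A i := by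
  have hpeel := one_sub_pow_mul_card_avoiding_le hx1.le ∅ (T := univ) fun j _ T' _ hj =>
    card_inter_avoiding_le vbl hdep hx0 hx1.le hnbr hp _ (by simpa using hj)
  have hpos : 0 < #(avoiding A (univ : Finset ι)) := by
    have : (0 : ℝ) < (1 - x) ^ #(univ : Finset ι) * #(avoiding A (∅ : Finset ι)) := by
      have : avoiding A (∅ : Finset ι) = univ := by simp [avoiding]
      rw [this, card_univ]
      have : 0 < 1 - x := by linarith
      positivity
    rw [empty_union] at hpeel
    exact_mod_cast this.trans_le hpeel
  obtain ⟨f, hf⟩ := card_pos.1 hpos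
  exact ⟨f, fun i => (mem_filter.1 hf).2 i (mem_univ i)⟩

end LocalLemma

section ColourCounting

variable {V α : Type*} [Fintype V] [Fintype α] [DecidableEq α]

theorem sum_pow_card_filter_eq (S : Finset V) (i : α) (r : ℝ) :
    ∑ c : V → α, r ^ #(S.filter fun u => c u = i) =
      (r + (Fintype.card α - 1)) ^ #S * (Fintype.card α : ℝ) ^ (Fintype.card V - #S) := by
  let w : V → α → ℝ := fun u j => if u ∈ S ∧ j = i then r else 1
  have hprod : ∀ c : V → α, r ^ #(S.filter fun u => c u = i) = ∏ u, w u (c u) := fun c => by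
    rw [prod_ite, prod_const, prod_const_one, mul_one]
    congr 2
    ext u
    simp
  have hcol : ∀ u, ∑ j, w u j =
      if u ∈ S then r + (Fintype.card α - 1) else Fintype.card α := by
    intro u
    split_ifs with hu
    · rw [Fintype.sum_eq_add_sum_compl i]
      simp only [w, hu, true_and]
      rw [sum_congr rfl fun j hj => if_neg (by simpa using hj)]
      have : 0 < Fintype.card α := Fintype.card_pos_iff.2 ⟨i⟩
      simp [card_compl, Nat.cast_pred this]
    · simp [w, hu]
  rw [Fintype.sum_congr _ _ hprod, ← Fintype.prod_sum, Fintype.prod_congr _ _ hcol, prod_ite,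
    prod_const, prod_const, filter_mem_eq_inter, univ_inter, filter_not, card_sdiff]
  simp

theorem card_many_coloured_mul_pow_le (S : Finset V) (i : α) {r : ℝ} (hr : 1 ≤ r) (a : ℕ) :
    #(univ.filter fun c : V → α => a ≤ #(S.filter fun u => c u = i)) * r ^ a ≤
      (r + (Fintype.card α - 1)) ^ #S * (Fintype.card α : ℝ) ^ (Fintype.card V - #S) := by
  rw [← sum_pow_card_filter_eq, ← nsmul_eq_mul, ← sum_const]
  calc ∑ _c ∈ univ.filter fun c : V → α => a ≤ #(S.filter fun u => c u = i), r ^ a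
      ≤ ∑ c ∈ univ.filter fun c : V → α => a ≤ #(S.filter fun u => c u = i),
          r ^ #(S.filter fun u => c u = i) :=
        sum_le_sum fun c hc => pow_le_pow_right₀ hr (mem_filter.1 hc).2
    _ ≤ ∑ c : V → α, r ^ #(S.filter fun u => c u = i) :=
        sum_le_sum_of_subset_of_nonneg (filter_subset _ _) fun _ _ _ => by positivity

theorem card_exists_many_coloured_mul_pow_le (S : Finset V) {r : ℝ} (hr : 1 ≤ r) (a : ℕ) :
    #(univ.filter fun c : V → α => ∃ i, a ≤ #(S.filter fun u => c u = i)) * r ^ a ≤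
      Fintype.card α *
        ((r + (Fintype.card α - 1)) ^ #S * (Fintype.card α : ℝ) ^ (Fintype.card V - #S)) := by
  have hunion : (univ.filter fun c : V → α => ∃ i, a ≤ #(S.filter fun u => c u = i)) =
      univ.biUnion fun i => univ.filter fun c : V → α => a ≤ #(S.filter fun u => c u = i) := by
    ext c
    simp
  calc (#(univ.filter fun c : V → α => ∃ i, a ≤ #(S.filter fun u => c u = i)) : ℝ) * r ^ a
      ≤ (∑ i, #(univ.filter fun c : V → α => a ≤ #(S.filter fun u => c u = i)) : ℕ) *
          r ^ a := by
        rw [hunion]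
        gcongr
        exact card_biUnion_le
    _ ≤ ∑ _i : α, (r + (Fintype.card α - 1)) ^ #S *
          (Fintype.card α : ℝ) ^ (Fintype.card V - #S) := by
        push_cast
        rw [sum_mul]
        exact sum_le_sum fun i _ => card_many_coloured_mul_pow_le S i hr a
    _ = _ := by simp

end ColourCounting

section Estimates

open Real

theorem log_one_add_le {u : ℝ} (hu : 0 ≤ u) : log (1 + u) ≤ u * (6 + u) / (6 + 4 * u) := by
  let f : ℝ → ℝ := fun u => u * (6 + u) / (6 + 4 * u) - log (1 + u)
  have hf : ∀ u : ℝ, 0 ≤ u → HasDerivAt f (4 * u ^ 3 / ((6 + 4 * u) ^ 2 * (1 + u))) u := by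
    intro u hu
    have hnum : HasDerivAt (fun u : ℝ => u * (6 + u)) (1 * (6 + u) + u * (0 + 1)) u :=
      (hasDerivAt_id u).mul ((hasDerivAt_const u 6).add (hasDerivAt_id u))
    have hden : HasDerivAt (fun u : ℝ => 6 + 4 * u) (0 + 4 * 1) u :=
      (hasDerivAt_const u 6).add ((hasDerivAt_id u).const_mul 4)
    have hlog : HasDerivAt (fun u : ℝ => log (1 + u)) ((0 + 1) / (1 + u)) u :=
      ((hasDerivAt_const u 1).add (hasDerivAt_id u)).log (by positivity : (0 : ℝ) < 1 + u).ne'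
    refine ((hnum.div hden (by linarith)).sub hlog).congr_deriv ?_
    field_simp
    ring
  have hmono : MonotoneOn f (Set.Ici 0) := by
    refine monotoneOn_of_deriv_nonneg (convex_Ici 0)
      (fun u hu => (hf u hu).continuousAt.continuousWithinAt) (fun u hu => ?_) fun u hu => ?_
    · rw [interior_Ici] at hu
      exact (hf u (le_of_lt hu)).differentiableAt.differentiableWithinAt
    · rw [interior_Ici, Set.mem_Ioi] at hu
      rw [(hf u hu.le).deriv]
      positivity
  have := hmono (Set.mem_Ici.2 le_rfl) (Set.mem_Ici.2 hu) hu
  simp only [f] at this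
  norm_num at this
  linarith

theorem inv_two_mul_add_mul_log_le {θ : ℝ} (hθ : 1 < θ) :
    1 / (2 * θ) + θ * log ((2 * θ - 1) / (2 * θ - 2)) ≤ log ((2 * θ - 1) / (θ - 1)) := by
  obtain ⟨s, hs, rfl⟩ : ∃ s : ℝ, 0 < s ∧ θ = s + 1 := ⟨θ - 1, by linarith, by ring⟩
  have hs' := hs.ne'
  have hρ : (2 * (s + 1) - 1) / (2 * (s + 1) - 2) = 1 + 1 / (2 * s) := by
    rw [show 2 * (s + 1) - 2 = 2 * s by ring]
    field_simp
    ring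
  have hr : (2 * (s + 1) - 1) / (s + 1 - 1) = 2 * (1 + 1 / (2 * s)) := by
    rw [add_sub_cancel_right]
    field_simp
    ring
  rw [hρ, hr, log_mul two_ne_zero (by positivity)]
  have hpade : s * log (1 + 1 / (2 * s)) ≤ (12 * s + 1) / (4 * (6 * s + 2)) := by
    have h := mul_le_mul_of_nonneg_left (log_one_add_le (u := 1 / (2 * s)) (by positivity)) hs.le
    refine h.trans_eq ?_
    field_simp
    ring
  have hlog2 : 1 / (2 * (s + 1)) + (12 * s + 1) / (4 * (6 * s + 2)) ≤ log 2 := by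
    rw [div_add_div _ _ (by positivity) (by positivity), div_le_iff₀ (by positivity)]
    nlinarith [log_two_gt_d9, sq_nonneg (10000 * s - 3041)]
  nlinarith

theorem inv_exp_one_mul_le (d : ℕ) :
    (exp 1 * (d + 1))⁻¹ ≤ (d + 1 : ℝ)⁻¹ * (1 - (d + 1 : ℝ)⁻¹) ^ d := by
  rcases d.eq_zero_or_pos with rfl | hd
  · simpa using inv_le_one_of_one_le₀ (one_le_exp zero_le_one)
  have h : 1 - (d + 1 : ℝ)⁻¹ = (1 + (d : ℝ)⁻¹)⁻¹ := by
    field_simp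
    ring
  rw [h, inv_pow, mul_inv, mul_comm]
  gcongr
  exact one_add_inv_pow_le_exp

theorem exp_one_mul_mul_rpow_le {θ : ℝ} {Δ k d : ℕ} (hθ : 1 < θ) (hΔ : 1 ≤ Δ)
    (hd : (d : ℝ) ≤ θ * Δ ^ 2)
    (hyp : exp 1 * θ ^ 2 * (Δ : ℝ) ^ 2 * k * exp (-(Δ / (2 * θ))) < 1) :
    exp 1 * (d + 1) * k * ((2 * θ - 1) / (2 * θ - 2)) ^ (θ * Δ) ≤
      ((2 * θ - 1) / (θ - 1)) ^ (Δ + 1) := by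
  set r := (2 * θ - 1) / (θ - 1)
  set ρ := (2 * θ - 1) / (2 * θ - 2)
  have hD : (1 : ℝ) ≤ Δ := by exact_mod_cast hΔ
  have hr : 2 < r := by rw [lt_div_iff₀ (by linarith)]; linarith
  have hρ : 0 < ρ := div_pos (by linarith) (by linarith)
  have hρD : ρ ^ (θ * Δ) ≤ exp (-(Δ / (2 * θ))) * r ^ Δ := by
    rw [rpow_def_of_pos hρ, ← rpow_natCast, rpow_def_of_pos (by linarith), ← exp_add]
    refine exp_le_exp.2 ?_
    have := mul_le_mul_of_nonneg_left (inv_two_mul_add_mul_log_le hθ) (Nat.cast_nonneg Δ)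
    have hΔθ : (Δ : ℝ) / (2 * θ) = Δ * (1 / (2 * θ)) := by ring
    linarith
  have hdθ : (d + 1 : ℝ) ≤ 2 * θ * Δ ^ 2 := by nlinarith
  calc exp 1 * (d + 1) * k * ρ ^ (θ * Δ)
      ≤ exp 1 * (2 * θ * Δ ^ 2) * k * (exp (-(Δ / (2 * θ))) * r ^ Δ) := by gcongr
    _ = 2 / θ * (exp 1 * θ ^ 2 * (Δ : ℝ) ^ 2 * k * exp (-(Δ / (2 * θ)))) * r ^ Δ := by
        field_simp
    _ ≤ r * 1 * r ^ Δ := by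
        gcongr
        exact (div_le_self zero_le_two hθ.le).trans hr.le
    _ = r ^ (Δ + 1) := by ring

theorem log_le_div_add {y : ℝ} (hy : 0 < y) : log y ≤ y / 16 + 3 := by
  have h16 : (16 : ℝ) ≤ exp 4 := by
    have := add_one_le_exp 1
    calc (16 : ℝ) = 2 ^ 4 := by norm_num
      _ ≤ exp 1 ^ 4 := by gcongr; linarith
      _ = exp 4 := by rw [← exp_nat_mul]; norm_num
  have h := add_one_le_exp (log y - 4)
  rw [exp_sub, exp_log hy] at h
  have : y / exp 4 ≤ y / 16 := by gcongr
  linarith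

theorem exp_one_mul_sq_mul_exp_neg_lt_one {θ D : ℝ} {k : ℕ} (hθ : 1 < θ) (hk : 3 ≤ k)
    (hc : 100 * θ * log (k * θ) ≤ D) :
    exp 1 * θ ^ 2 * D ^ 2 * k * exp (-(D / (2 * θ))) < 1 := by
  have hθ0 : 0 < θ := by linarith
  have hk0 : (0 : ℝ) < k := by positivity
  have hL : 1 ≤ log (k * θ) := by
    rw [le_log_iff_exp_le (by positivity)]
    have : (3 : ℝ) ≤ k := by exact_mod_cast hk
    nlinarith [exp_one_lt_d9]
  have hD : 0 < D := by nlinarith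
  have hu : 100 * log (k * θ) ≤ D / θ := by rw [le_div_iff₀ hθ0]; linarith
  have hlog : log (θ ^ 2 * D ^ 2 * k) = 4 * log θ + 2 * log (D / θ) + log k := by
    rw [log_mul (by positivity) hk0.ne', log_mul (by positivity) (by positivity), log_pow,
      log_pow, log_div hD.ne' hθ0.ne']
    push_cast
    ring
  have hsplit : log (k * θ) = log k + log θ := log_mul hk0.ne' hθ0.ne'
  have hexp : exp 1 * (θ ^ 2 * D ^ 2 * k) < exp (D / (2 * θ)) := by
    rw [← exp_log (by positivity : 0 < θ ^ 2 * D ^ 2 * k), ← exp_add, exp_lt_exp, hlog,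
      show D / (2 * θ) = D / θ / 2 by ring]
    nlinarith [log_le_div_add (div_pos hD hθ0), log_nonneg hθ.le,
      log_nonneg (by exact_mod_cast (by omega : 1 ≤ k) : (1 : ℝ) ≤ k)]
  rw [exp_neg, ← div_eq_mul_inv, div_lt_one (exp_pos _)]
  linarith

end Estimates

section Graph

variable {V : Type*} [Fintype V] (G : SimpleGraph V)

theorem card_filter_not_disjoint_neighborFinset_le (v : V) :
    #(univ.filter fun w => ¬Disjoint (G.neighborFinset v) (G.neighborFinset w)) ≤
      ∑ u ∈ G.neighborFinset v, G.degree u := by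
  refine (card_le_card fun w hw => ?_).trans card_biUnion_le
  obtain ⟨u, hvu, hwu⟩ := not_disjoint_iff.1 (mem_filter.1 hw).2
  simp only [mem_biUnion, SimpleGraph.mem_neighborFinset] at hvu hwu ⊢
  exact ⟨u, hvu, hwu.symm⟩

end Graph

theorem degree_eq_degIn (G : SimpleGraph (Fin n)) (v : Fin n) : G.degree v = degIn G univ v := by
  rw [← SimpleGraph.card_neighborFinset_eq_degree, SimpleGraph.neighborFinset_eq_filter]
  rfl

theorem degree_le_maxDegOn {G : SimpleGraph (Fin n)} {W : Finset (Fin n)} {v : Fin n}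
    (hv : v ∈ W) : G.degree v ≤ maxDegOn G W :=
  degree_eq_degIn G v ▸ le_sup (f := fun v => degIn G univ v) hv

theorem sum_degree_neighborFinset_le {G : SimpleGraph (Fin n)} {VL : Finset (Fin n)}
    (hbip : Bipartite G VL) (v : Fin n) :
    ∑ u ∈ G.neighborFinset v, G.degree u ≤ maxDegOn G VLᶜ * maxDegOn G VL := by
  by_cases hv : v ∈ VL
  · rw [mul_comm]
    refine (sum_le_card_nsmul _ _ (maxDegOn G VLᶜ) fun u hu => degree_le_maxDegOn ?_).trans
      (Nat.mul_le_mul_right _ (degree_le_maxDegOn hv))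
    rw [SimpleGraph.mem_neighborFinset] at hu
    exact mem_compl.2 ((hbip v u hu).1 hv)
  · refine (sum_le_card_nsmul _ _ (maxDegOn G VL) fun u hu => degree_le_maxDegOn ?_).trans
      (Nat.mul_le_mul_right _ (degree_le_maxDegOn (mem_compl.2 hv)))
    rw [SimpleGraph.mem_neighborFinset] at hu
    exact (hbip u v hu.symm).2 hv

section BalancedColouring

open Real

variable {V : Type*} [Fintype V]

theorem card_exists_many_coloured_mul_pow_le_of_two_mul_le {θ : ℝ} {Δ k : ℕ} (hθ : 1 < θ)
    (hk : 2 * θ ≤ k) {S : Finset V} (hS : (#S : ℝ) ≤ θ * Δ) :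
    #(univ.filter fun c : V → Fin k => ∃ i, Δ + 1 ≤ #(S.filter fun u => c u = i)) *
        ((2 * θ - 1) / (θ - 1)) ^ (Δ + 1) ≤
      k * ((2 * θ - 1) / (2 * θ - 2)) ^ (θ * Δ) * (k : ℝ) ^ Fintype.card V := by
  have hbase : (2 * θ - 1) / (θ - 1) + (k - 1) ≤ (2 * θ - 1) / (2 * θ - 2) * k := by
    have : θ - 1 ≠ 0 := by linarith
    have : 2 * θ - 2 ≠ 0 := by linarith
    have h : (2 * θ - 1) / (θ - 1) + (k - 1) - (2 * θ - 1) / (2 * θ - 2) * k =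
        (2 * θ - k) / (2 * θ - 2) := by
      field_simp
      ring
    have : (2 * θ - k) / (2 * θ - 2) ≤ 0 :=
      div_nonpos_of_nonpos_of_nonneg (by linarith) (by linarith)
    linarith
  set r := (2 * θ - 1) / (θ - 1)
  set ρ := (2 * θ - 1) / (2 * θ - 2)
  have hr : 1 ≤ r := by rw [le_div_iff₀ (by linarith)]; linarith
  have hρ : 1 ≤ ρ := by rw [le_div_iff₀ (by linarith)]; linarith
  have hcard : #S ≤ Fintype.card V := card_le_univ S
  refine (Eq.trans_le (by congr) (card_exists_many_coloured_mul_pow_le S hr (Δ + 1))).trans ?_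
  simp only [Fintype.card_fin, mul_assoc]
  gcongr k * ?_
  calc (r + (k - 1)) ^ #S * (k : ℝ) ^ (Fintype.card V - #S)
      ≤ (ρ * k) ^ #S * (k : ℝ) ^ (Fintype.card V - #S) := by
        gcongr
        linarith
    _ = ρ ^ #S * (k : ℝ) ^ Fintype.card V := by rw [mul_pow, mul_assoc, pow_mul_pow_sub _ hcard]
    _ ≤ ρ ^ (θ * Δ) * (k : ℝ) ^ Fintype.card V := by
        gcongr
        rw [← rpow_natCast]
        exact rpow_le_rpow_of_exponent_le hρ hS

theorem exists_colouring_card_filter_le (G : SimpleGraph V) {θ : ℝ} {Δ k d : ℕ} (hθ : 1 < θ)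
    (hk : 2 * θ ≤ k) (hΔ : 1 ≤ Δ) (hdeg : ∀ v, (G.degree v : ℝ) ≤ θ * Δ)
    (hcodeg : ∀ v, ∑ u ∈ G.neighborFinset v, G.degree u ≤ d) (hd : 1 ≤ d)
    (hdΔ : (d : ℝ) ≤ θ * Δ ^ 2)
    (hyp : exp 1 * θ ^ 2 * (Δ : ℝ) ^ 2 * k * exp (-(Δ / (2 * θ))) < 1) :
    ∃ c : V → Fin k, ∀ v i, #((G.neighborFinset v).filter fun u => c u = i) ≤ Δ := by
  have : Nonempty (Fin k) := ⟨⟨0, by exact_mod_cast (by linarith : (0 : ℝ) < k)⟩⟩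
  have hx : (d + 1 : ℝ)⁻¹ < 1 := inv_lt_one_of_one_lt₀ (by norm_cast; omega)
  set A : V → Finset (V → Fin k) := fun v => univ.filter fun c : V → Fin k =>
    ∃ i, Δ + 1 ≤ #((G.neighborFinset v).filter fun u => c u = i)
  have hdep : ∀ v, DependsOn (· ∈ A v) (G.neighborFinset v : Set V) := fun v f g hfg => by
    have : ∀ i, (G.neighborFinset v).filter (f · = i) = (G.neighborFinset v).filter (g · = i) :=
      fun i => filter_congr fun u hu => by rw [hfg u (mem_coe.2 hu)]
    simp only [A, mem_filter, mem_univ, true_and, this]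
  have hnbr : ∀ v, #((univ.filter fun w =>
      ¬Disjoint (G.neighborFinset v) (G.neighborFinset w)).erase v) ≤ d := fun v =>
    card_erase_le.trans ((card_filter_not_disjoint_neighborFinset_le G v).trans (hcodeg v))
  have hp : ∀ v, (#(A v) : ℝ) ≤
      (d + 1 : ℝ)⁻¹ * (1 - (d + 1 : ℝ)⁻¹) ^ d * Fintype.card (V → Fin k) := by
    intro v
    set E := exp 1 * (d + 1)
    set R := ((2 * θ - 1) / (θ - 1)) ^ (Δ + 1)
    set K := (k : ℝ) ^ Fintype.card V
    have hR : 0 < R := pow_pos (div_pos (by linarith) (by linarith)) _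
    have hchernoff := card_exists_many_coloured_mul_pow_le_of_two_mul_le hθ hk
      (S := G.neighborFinset v) (by simpa using hdeg v)
    have hbound : E * #(A v) * R ≤ R * K := by
      calc E * #(A v) * R ≤ E * (k * ((2 * θ - 1) / (2 * θ - 2)) ^ (θ * Δ) * K) := by
            rw [mul_assoc]
            gcongr
        _ = E * k * ((2 * θ - 1) / (2 * θ - 2)) ^ (θ * Δ) * K := by ring
        _ ≤ R * K := by
            gcongr
            exact exp_one_mul_mul_rpow_le hθ hΔ hdΔ hyp
    have hE : 0 < E := by positivity
    calc (#(A v) : ℝ) ≤ E⁻¹ * K := by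
          rw [le_inv_mul_iff₀ hE]
          exact le_of_mul_le_mul_right (by linarith) hR
      _ ≤ (d + 1 : ℝ)⁻¹ * (1 - (d + 1 : ℝ)⁻¹) ^ d * Fintype.card (V → Fin k) := by
          rw [Fintype.card_fun, Fintype.card_fin, Nat.cast_pow]
          gcongr
          exact inv_exp_one_mul_le d
  obtain ⟨c, hc⟩ :=
    lovasz_local_lemma (fun v => G.neighborFinset v) hdep (by positivity) hx hnbr hp
  exact ⟨c, fun v => by simpa [A] using hc v⟩

end BalancedColouring

theorem exists_partition_degIn_le (θ : ℝ) (k n : ℕ) (G : SimpleGraph (Fin n))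
    (VL : Finset (Fin n)) (hθ : 1 < θ) (hk : ⌈2 * θ⌉₊ ≤ k) (hbip : Bipartite G VL)
    (hΔ : 1 ≤ maxDegOn G VL) (hR : (maxDegOn G VLᶜ : ℝ) ≤ θ * (maxDegOn G VL : ℝ))
    (hyp : Real.exp 1 * θ ^ 2 * (maxDegOn G VL : ℝ) ^ 2 * (k : ℝ) *
      Real.exp (-((maxDegOn G VL : ℝ) / (2 * θ))) < 1) :
    ∃ U : Fin k → Finset (Fin n),
      (∀ i j, i ≠ j → Disjoint (U i) (U j)) ∧
      (∀ v : Fin n, v ∈ VL ↔ ∃ i, v ∈ U i) ∧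
      ∀ v ∈ VLᶜ, ∀ i : Fin k, degIn G (U i) v ≤ maxDegOn G VL := by
  set Δ := maxDegOn G VL
  have hθΔ : (1 : ℝ) ≤ θ * Δ := by
    have : (1 : ℝ) ≤ Δ := by exact_mod_cast hΔ
    nlinarith
  have hdeg : ∀ v, (G.degree v : ℝ) ≤ θ * Δ := by
    intro v
    by_cases hv : v ∈ VL
    · have : (G.degree v : ℝ) ≤ Δ := by exact_mod_cast degree_le_maxDegOn hv
      nlinarith
    · exact le_trans (by exact_mod_cast degree_le_maxDegOn (mem_compl.2 hv)) hR
  obtain ⟨c, hc⟩ := exists_colouring_card_filter_le G hθ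
    ((Nat.le_ceil _).trans (by exact_mod_cast hk)) hΔ hdeg (d := ⌊θ * Δ⌋₊ * Δ)
    (fun v => (sum_degree_neighborFinset_le hbip v).trans
      (Nat.mul_le_mul_right _ (Nat.le_floor hR)))
    (Nat.one_le_iff_ne_zero.2 (mul_ne_zero (by simpa using hθΔ) (by omega)))
    (by push_cast; nlinarith [Nat.floor_le (by linarith : (0 : ℝ) ≤ θ * Δ)]) hyp
  refine ⟨fun i => VL.filter (c · = i), fun i j hij => ?_, fun v => ?_, fun v _ i => ?_⟩
  · exact disjoint_filter.2 fun u _ hi hj => hij (hi ▸ hj)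
  · simp
  · refine (card_le_card fun u hu => ?_).trans (hc v i)
    simp only [mem_filter, SimpleGraph.mem_neighborFinset] at hu ⊢
    exact ⟨hu.2, hu.1.2⟩

/-- Proposition 8.3: partitioning the left part of a
bipartite graph.  Let `θ > 1` and `k ≥ ⌈2θ⌉`.  If
`e·θ²·Δ_L²·k·exp(−Δ_L/(2θ)) < 1` then `V_L` can be partitioned into
`U_1 ⊎ ⋯ ⊎ U_k` with `|Γ(v) ∩ U_i| ≤ Δ_L` for all `v ∈ V_R` and `i ∈ [k]`;
in particular, there is an absolute constant `c` such that this holds whenever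
`Δ_L ≥ c·θ·log(kθ)`. -/
theorem statement14 :
    (∀ (θ : ℝ) (k n : ℕ) (G : SimpleGraph (Fin n)) (VL : Finset (Fin n)),
      1 < θ → ⌈2 * θ⌉₊ ≤ k → Bipartite G VL → 1 ≤ maxDegOn G VL →
      (maxDegOn G VLᶜ : ℝ) ≤ θ * (maxDegOn G VL : ℝ) →
      Real.exp 1 * θ ^ 2 * (maxDegOn G VL : ℝ) ^ 2 * (k : ℝ) *
          Real.exp (-((maxDegOn G VL : ℝ) / (2 * θ))) < 1 →
      ∃ U : Fin k → Finset (Fin n),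
        (∀ i j, i ≠ j → Disjoint (U i) (U j)) ∧
        (∀ v : Fin n, v ∈ VL ↔ ∃ i, v ∈ U i) ∧
        ∀ v ∈ VLᶜ, ∀ i : Fin k, degIn G (U i) v ≤ maxDegOn G VL)
    ∧
    ∃ c : ℝ, 0 < c ∧
      ∀ (θ : ℝ) (k n : ℕ) (G : SimpleGraph (Fin n)) (VL : Finset (Fin n)),
        1 < θ → ⌈2 * θ⌉₊ ≤ k → Bipartite G VL → 1 ≤ maxDegOn G VL →
        (maxDegOn G VLᶜ : ℝ) ≤ θ * (maxDegOn G VL : ℝ) →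
        c * θ * Real.log ((k : ℝ) * θ) ≤ (maxDegOn G VL : ℝ) →
        ∃ U : Fin k → Finset (Fin n),
          (∀ i j, i ≠ j → Disjoint (U i) (U j)) ∧
          (∀ v : Fin n, v ∈ VL ↔ ∃ i, v ∈ U i) ∧
          ∀ v ∈ VLᶜ, ∀ i : Fin k, degIn G (U i) v ≤ maxDegOn G VL := by
  refine ⟨exists_partition_degIn_le, 100, by norm_num, ?_⟩
  intro θ k n G VL hθ hk hbip hΔ hR hc
  have hk3 : 3 ≤ k := by
    have := Nat.lt_ceil.2 (by push_cast; linarith : ((2 : ℕ) : ℝ) < 2 * θ)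
    omega
  exact exists_partition_degIn_le θ k n G VL hθ hk hbip hΔ hR
    (exp_one_mul_sq_mul_exp_neg_lt_one hθ hk3 hc)

end Paper
end
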